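/- The optimal value of the following semidefinite program equals 3/4: maximize (1/2)⟨σ₀, P₀⟩ + (1/2)⟨σ₁, P₁⟩ over density matrices σ₀, σ₁ on Y ⊗ A₀ ⊗ B₀ ⊗ A₁ ⊗ B₁ = ℂ² ⊗ ℂ³ ⊗ ℂ³ ⊗ ℂ³ ⊗ ℂ³, subject to Tr_{Y,A₀,A₁}(σ₀) = Tr_{Y,A₀,A₁}(σ₁) (equal partial traces onto B₀ ⊗ B₁), where P₀ = Σ_{y∈{0,1}} |y⟩⟨y|_Y ⊗ |φ_y⟩⟨φ_y|_{A₀⊗B₀} ⊗ 1_{A₁} ⊗ |2⟩⟨2|_{B₁} and P₁ = Σ_{y∈{0,1}} |y⟩⟨y|_Y ⊗ 1_{A₀} ⊗ |2⟩⟨2|_{B₀} ⊗ |φ_y⟩⟨φ_y|_{A₁⊗B₁}. (This is the optimal probability with which a cheating Alice forces outcome 1 in the EPR-based weak coin flipping protocol.) -/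

import Mathlib

/-! STATEMENT 2: Alice's optimal cheating probability (forcing outcome 1) in the EPR-based weak coin flipping protocol equals 3/4. -/

open Matrix
open scoped Matrix BigOperators ComplexOrder

noncomputable section

/-- Square matrices over ℂ indexed by `α`. -/
abbrev Mat (α : Type) : Type := Matrix α α ℂ

/-- A density matrix: positive semidefinite with unit trace. -/
def IsDensity {α : Type} [Fintype α] [DecidableEq α] (ρ : Mat α) : Prop :=
  ρ.PosSemidef ∧ ρ.trace = 1

/-- Hilbert–Schmidt inner product ⟨P, Q⟩ = Tr(P† Q). -/
def hs {α : Type} [Fintype α] (P Q : Mat α) : ℂ := (Pᴴ * Q).trace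

/-- Outer product |v⟩⟨v|. -/
def outer {α : Type} (v : α → ℂ) : Mat α := fun i j => v i * star (v j)

/-- Standard basis vector |i⟩. -/
def ket {α : Type} [DecidableEq α] (i : α) : α → ℂ := fun j => if j = i then 1 else 0

/-- The embedding of Fin 2 into Fin 3. -/
def f23 (y : Fin 2) : Fin 3 := ⟨y.val, by omega⟩

/-- |φ_y⟩ = (|yy⟩ + |22⟩)/√2 ∈ ℂ³ ⊗ ℂ³. -/
def phi (y : Fin 2) : Fin 3 × Fin 3 → ℂ :=
  fun p => (ket (f23 y, f23 y) p + ket ((2 : Fin 3), (2 : Fin 3)) p) / (Real.sqrt 2 : ℂ)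

/-- Partial trace over the first tensor factor. -/
def ptrA {α β : Type} [Fintype α] (ρ : Mat (α × β)) : Mat β :=
  fun b b' => ∑ a, ρ (a, b) (a, b')

/-- Index for Y ⊗ A₀ ⊗ B₀ ⊗ A₁ ⊗ B₁. -/
abbrev I5 : Type := Fin 2 × Fin 3 × Fin 3 × Fin 3 × Fin 3

/-- P₀ = Σ_y |y⟩⟨y|_Y ⊗ |φ_y⟩⟨φ_y|_{A₀⊗B₀} ⊗ 1_{A₁} ⊗ |2⟩⟨2|_{B₁}. -/
def P0w : Mat I5 := fun p q =>
  match p, q with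
  | (y, a0, b0, a1, b1), (y', a0', b0', a1', b1') =>
    ∑ u : Fin 2, ket u y * star (ket u y') *
      (phi u (a0, b0) * star (phi u (a0', b0'))) *
      (if a1 = a1' then 1 else 0) *
      (ket (2 : Fin 3) b1 * star (ket (2 : Fin 3) b1'))

/-- P₁ = Σ_y |y⟩⟨y|_Y ⊗ 1_{A₀} ⊗ |2⟩⟨2|_{B₀} ⊗ |φ_y⟩⟨φ_y|_{A₁⊗B₁}. -/
def P1w : Mat I5 := fun p q =>
  match p, q with
  | (y, a0, b0, a1, b1), (y', a0', b0', a1', b1') =>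
    ∑ u : Fin 2, ket u y * star (ket u y') *
      (if a0 = a0' then 1 else 0) *
      (ket (2 : Fin 3) b0 * star (ket (2 : Fin 3) b0')) *
      (phi u (a1, b1) * star (phi u (a1', b1')))

/-- Partial trace over Y, A₀ and A₁, onto B₀ ⊗ B₁. -/
def trYA (ρ : Mat I5) : Mat (Fin 3 × Fin 3) :=
  fun p q => ∑ y, ∑ a0, ∑ a1,
    ρ (y, a0, p.1, a1, p.2) (y, a0, q.1, a1, q.2)

/-
Weak SDP duality. Basis states are written `|y a₀ b₀ a₁ b₁⟩`. The swap `S` of the registers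
`(A₀, B₀) ↔ (A₁, B₁)` carries `P₀` to `P₁`, negates the dual variable below and swaps the marginal
on `B₀ ⊗ B₁`, so every estimate is proved on the `P₀` side only.

Dual: `Z` is diagonal on `B₀ ⊗ B₁` with weight `3/4` at `(b, 2)`, `-3/4` at `(2, b)` for `b ≠ 2`,
and `0` elsewhere. `P₀ = ∑_{y,c} |g⟩⟨g|` with `g = (|y y y c 2⟩ + |y 2 2 c 2⟩)/√2`, and
`3/4 + 1 ⊗ Z` weighs these two basis states by `3/2` and `3/4`; since
`3/2 |a|² + 3/4 |b|² - |a + b|²/2 = |a - b/2|²`, this gives `3/4 + 1 ⊗ Z ≥ P₀`, and conjugating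
by `S`, `3/4 - 1 ⊗ Z ≥ P₁`. Pairing with `σ₀`, `σ₁`, the `Z` terms cancel as the marginals agree.

Primal: `σ₀ = (|v⟩⟨v| + |0 0 2 0 0⟩⟨0 0 2 0 0|)/6` with `v = |0 0 0 0 2⟩ + 2 |0 2 2 0 2⟩` and
`σ₁ = S σ₀ S`; their common marginal is `diag(1, 4, 1)/6` on `|02⟩, |22⟩, |20⟩`, and
`⟨σ₀, P₀⟩ = (|1 + 2|²/2)/6 = 3/4`.
-/

lemma star_ket_apply {n : Type} [DecidableEq n] (i j : n) : star (ket i j) = ket i j := by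
  simp [ket, apply_ite]

lemma star_ket {n : Type} [DecidableEq n] (i : n) : star (ket i) = ket i :=
  funext (star_ket_apply i)

section General

variable {m n : Type} [Fintype m] [Fintype n]

lemma Fintype.sum_comp_le_sum_of_injective {e : m → n} (he : Function.Injective e) {f : n → ℝ}
    (hf : ∀ p, 0 ≤ f p) : ∑ k, f (e k) ≤ ∑ p, f p := by
  classical
  rw [← Finset.sum_image fun _ _ _ _ h => he h]
  exact Finset.sum_le_univ_sum_of_nonneg hf

lemma Complex.normSq_add_div_two_le (a b : ℂ) :
    normSq (a + b) / 2 ≤ 3 / 2 * normSq a + 3 / 4 * normSq b := by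
  simp only [normSq_apply, add_re, add_im]
  nlinarith [sq_nonneg (a.re - b.re / 2), sq_nonneg (a.im - b.im / 2)]

lemma Matrix.PosSemidef.trace_mul_nonneg [DecidableEq n] {A B : Mat n} (hA : A.PosSemidef)
    (hB : B.PosSemidef) : 0 ≤ (A * B).trace := by
  obtain ⟨C, rfl⟩ : ∃ C : Mat n, B = star C * C := by
    open scoped MatrixOrder in exact CStarAlgebra.nonneg_iff_eq_star_mul_self.mp hB.nonneg
  rw [← mul_assoc, trace_mul_comm, ← mul_assoc]
  exact (hA.mul_mul_conjTranspose_same C).trace_nonneg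

lemma hs_of_isHermitian {ρ : Mat n} (hρ : ρ.IsHermitian) (P : Mat n) :
    hs ρ P = (ρ * P).trace := by
  rw [hs, hρ.eq]

lemma hs_neg (ρ P : Mat n) : hs ρ (-P) = -hs ρ P := by
  rw [hs, hs, Matrix.mul_neg, trace_neg]

lemma hs_le_hs_of_posSemidef_sub [DecidableEq n] {ρ P Q : Mat n} (hρ : ρ.PosSemidef)
    (hPQ : (Q - P).PosSemidef) : hs ρ P ≤ hs ρ Q := by
  rw [hs_of_isHermitian hρ.1, hs_of_isHermitian hρ.1, ← sub_nonneg, ← trace_sub, ← mul_sub]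
  exact hρ.trace_mul_nonneg hPQ

lemma IsDensity.hs_smul_one_add [DecidableEq n] {ρ : Mat n} (hρ : IsDensity ρ) (c : ℂ)
    (L : Mat n) : hs ρ (c • 1 + L) = c + hs ρ L := by
  rw [hs_of_isHermitian hρ.1.1, hs_of_isHermitian hρ.1.1, mul_add, trace_add, Matrix.mul_smul,
    mul_one, trace_smul, hρ.2, smul_eq_mul, mul_one]

lemma trace_submatrix_equiv (A : Mat n) (e : m ≃ n) : (A.submatrix e e).trace = A.trace :=
  e.sum_comp fun i => A i i

lemma hs_submatrix_equiv (ρ P : Mat n) (e : m ≃ n) :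
    hs (ρ.submatrix e e) (P.submatrix e e) = hs ρ P := by
  rw [hs, hs, conjTranspose_submatrix, submatrix_mul_equiv, trace_submatrix_equiv]

lemma IsDensity.submatrix_equiv [DecidableEq m] [DecidableEq n] {ρ : Mat n} (hρ : IsDensity ρ)
    (e : m ≃ n) : IsDensity (ρ.submatrix e e) :=
  ⟨hρ.1.submatrix e, (trace_submatrix_equiv ρ e).trans hρ.2⟩

lemma posSemidef_outer (v : n → ℂ) : (outer v).PosSemidef :=
  posSemidef_vecMulVec_self_star v

lemma trace_outer (v : n → ℂ) : (outer v).trace = star v ⬝ᵥ v := by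
  simp only [trace, diag, outer, dotProduct, Pi.star_apply, mul_comm]

lemma trace_outer_mul (v : n → ℂ) (P : Mat n) : (outer v * P).trace = star v ⬝ᵥ P *ᵥ v := by
  simp only [outer, trace, diag, mul_apply, dotProduct, mulVec, Finset.mul_sum, Pi.star_apply]
  rw [Finset.sum_comm]
  exact Finset.sum_congr rfl fun i _ => Finset.sum_congr rfl fun j _ => by ring

lemma star_dotProduct_outer_mulVec (v x : n → ℂ) :
    star x ⬝ᵥ outer v *ᵥ x = Complex.normSq (star v ⬝ᵥ x) := by
  rw [Complex.normSq_eq_conj_mul_self]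
  simp only [outer, dotProduct, mulVec, Finset.mul_sum, Pi.star_apply, ← Complex.star_def,
    star_sum, star_mul', star_star, Finset.sum_mul]
  rw [Finset.sum_comm]
  exact Finset.sum_congr rfl fun i _ => Finset.sum_congr rfl fun j _ => by ring

lemma star_dotProduct_diagonal_mulVec [DecidableEq n] (d : n → ℝ) (x : n → ℂ) :
    star x ⬝ᵥ diagonal (fun p => (d p : ℂ)) *ᵥ x
      = ((∑ p, d p * Complex.normSq (x p) : ℝ) : ℂ) := by
  push_cast
  refine Finset.sum_congr rfl fun p _ => ?_
  rw [mulVec_diagonal, Complex.normSq_eq_conj_mul_self]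
  simp only [Pi.star_apply, Complex.star_def]
  ring

lemma ket_dotProduct [DecidableEq n] (i : n) (x : n → ℂ) : ket i ⬝ᵥ x = x i := by
  simp [ket, dotProduct]

lemma sum_ket_mul_ket [DecidableEq n] (a b : n) :
    ∑ c, ket c a * ket c b = if a = b then 1 else 0 := by
  simp [ket]

end General

def swapAB : I5 ≃ I5 where
  toFun p := (p.1, p.2.2.2.1, p.2.2.2.2, p.2.1, p.2.2.1)
  invFun p := (p.1, p.2.2.2.1, p.2.2.2.2, p.2.1, p.2.2.1)
  left_inv _ := rfl
  right_inv _ := rfl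

lemma P0w_submatrix_swapAB : P0w.submatrix swapAB swapAB = P1w := by
  ext ⟨y, a0, b0, a1, b1⟩ ⟨y', a0', b0', a1', b1'⟩
  simp only [submatrix_apply, swapAB, Equiv.coe_fn_mk, P0w, P1w]
  exact Finset.sum_congr rfl fun u _ => by ring

lemma trYA_submatrix_swapAB (ρ : Mat I5) :
    trYA (ρ.submatrix swapAB swapAB) = (trYA ρ).submatrix Prod.swap Prod.swap := by
  ext b b'
  exact Finset.sum_congr rfl fun y _ => Finset.sum_comm

lemma f23_ne_two (u : Fin 2) : f23 u ≠ 2 := by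
  fin_cases u <;> decide

def idxYY (k : Fin 2 × Fin 3) : I5 := (k.1, f23 k.1, f23 k.1, k.2, 2)

def idx22 (k : Fin 2 × Fin 3) : I5 := (k.1, 2, 2, k.2, 2)

def P0vec (k : Fin 2 × Fin 3) : I5 → ℂ := (Real.sqrt 2 : ℂ)⁻¹ • (ket (idxYY k) + ket (idx22 k))

lemma P0vec_apply (k : Fin 2 × Fin 3) (y : Fin 2) (a0 b0 a1 b1 : Fin 3) :
    P0vec k (y, a0, b0, a1, b1) = ket k.1 y * phi k.1 (a0, b0) * ket k.2 a1 * ket 2 b1 := by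
  simp only [P0vec, idxYY, idx22, phi, ket, Pi.smul_apply, Pi.add_apply, smul_eq_mul,
    Prod.mk.injEq]
  split_ifs <;> simp_all [div_eq_inv_mul]

lemma P0w_eq_sum_outer : P0w = ∑ k, outer (P0vec k) := by
  ext ⟨y, a0, b0, a1, b1⟩ ⟨y', a0', b0', a1', b1'⟩
  rw [Matrix.sum_apply, Fintype.sum_prod_type]
  refine Finset.sum_congr rfl fun u _ => ?_
  rw [← sum_ket_mul_ket a1 a1']
  simp only [outer, P0vec_apply, star_mul', star_ket_apply, Finset.mul_sum, Finset.sum_mul]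
  exact Finset.sum_congr rfl fun c _ => by ring

lemma star_P0vec_dotProduct (k : Fin 2 × Fin 3) (x : I5 → ℂ) :
    star (P0vec k) ⬝ᵥ x = (Real.sqrt 2 : ℂ)⁻¹ * (x (idxYY k) + x (idx22 k)) := by
  simp only [P0vec, star_smul, star_add, star_ket, smul_dotProduct, add_dotProduct, ket_dotProduct,
    smul_eq_mul, star_inv₀, Complex.star_def, Complex.conj_ofReal]

lemma star_dotProduct_P0w_mulVec (x : I5 → ℂ) :
    star x ⬝ᵥ P0w *ᵥ x = ((∑ k, Complex.normSq (x (idxYY k) + x (idx22 k)) / 2 : ℝ) : ℂ) := by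
  rw [P0w_eq_sum_outer, sum_mulVec, dotProduct_sum]
  push_cast
  refine Finset.sum_congr rfl fun k _ => ?_
  rw [star_dotProduct_outer_mulVec, star_P0vec_dotProduct, Complex.normSq_mul,
    Complex.normSq_inv, Complex.normSq_ofReal, Real.mul_self_sqrt zero_le_two]
  push_cast
  ring

def dualWeight (b : Fin 3 × Fin 3) : ℝ :=
  if b.1 ≠ 2 ∧ b.2 = 2 then 3 / 4 else if b.1 = 2 ∧ b.2 ≠ 2 then -3 / 4 else 0

lemma dualWeight_swap (b : Fin 3 × Fin 3) : dualWeight b.swap = -dualWeight b := by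
  unfold dualWeight
  split_ifs <;> simp_all <;> norm_num

def dualMat : Mat I5 := diagonal fun p => (dualWeight (p.2.2.1, p.2.2.2.2) : ℂ)

lemma dualMat_submatrix_swapAB : dualMat.submatrix swapAB swapAB = -dualMat := by
  rw [dualMat, submatrix_diagonal_equiv, diagonal_neg]
  congr 1; funext p
  simp only [Function.comp_apply, swapAB, Equiv.coe_fn_mk]
  exact_mod_cast dualWeight_swap (p.2.2.1, p.2.2.2.2)

lemma trace_mul_dualMat (σ : Mat I5) :
    (σ * dualMat).trace = ∑ b, (dualWeight b : ℂ) * trYA σ b b := by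
  let e : (Fin 3 × Fin 3) × (Fin 2 × Fin 3 × Fin 3) ≃ I5 :=
    { toFun q := (q.2.1, q.2.2.1, q.1.1, q.2.2.2, q.1.2)
      invFun p := ((p.2.2.1, p.2.2.2.2), (p.1, p.2.1, p.2.2.2.1))
      left_inv _ := rfl
      right_inv _ := rfl }
  simp only [dualMat, trace, diag, mul_diagonal, ← e.sum_comp, Fintype.sum_prod_type, trYA,
    Finset.mul_sum]
  exact Finset.sum_congr rfl fun _ _ => Finset.sum_congr rfl fun _ _ =>
    Finset.sum_congr rfl fun _ _ => Finset.sum_congr rfl fun _ _ =>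
    Finset.sum_congr rfl fun _ _ => mul_comm _ _

lemma hs_dualMat {σ : Mat I5} (hσ : σ.IsHermitian) :
    hs σ dualMat = ∑ b, (dualWeight b : ℂ) * trYA σ b b := by
  rw [hs_of_isHermitian hσ, trace_mul_dualMat]

lemma sum_normSq_le_sum_dualWeight_mul_normSq (x : I5 → ℂ) :
    ∑ k, Complex.normSq (x (idxYY k) + x (idx22 k)) / 2
      ≤ ∑ p : I5, (3 / 4 + dualWeight (p.2.2.1, p.2.2.2.2)) * Complex.normSq (x p) := by
  set f : I5 → ℝ := fun p => (3 / 4 + dualWeight (p.2.2.1, p.2.2.2.2)) * Complex.normSq (x p)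
  have hYY (k : Fin 2 × Fin 3) : f (idxYY k) = 3 / 2 * Complex.normSq (x (idxYY k)) := by
    simp only [f, idxYY, dualWeight, ne_eq, f23_ne_two, not_false_eq_true, and_self, if_true]
    ring
  have h22 (k : Fin 2 × Fin 3) : f (idx22 k) = 3 / 4 * Complex.normSq (x (idx22 k)) := by
    simp only [f, idx22, dualWeight]
    norm_num
  have hf (p : I5) : 0 ≤ f p := by
    refine mul_nonneg ?_ (Complex.normSq_nonneg _)
    unfold dualWeight; split_ifs <;> norm_num
  calc ∑ k, Complex.normSq (x (idxYY k) + x (idx22 k)) / 2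
      ≤ ∑ k, (f (idxYY k) + f (idx22 k)) := by
        simp only [hYY, h22]
        exact Finset.sum_le_sum fun k _ => Complex.normSq_add_div_two_le _ _
    _ = ∑ s, f (Sum.elim idxYY idx22 s) := by
        rw [Fintype.sum_sum_type, Finset.sum_add_distrib]; rfl
    _ ≤ ∑ p, f p := Fintype.sum_comp_le_sum_of_injective (by decide) hf

lemma posSemidef_dual_sub_P0w : ((3 / 4 : ℂ) • 1 + dualMat - P0w).PosSemidef := by
  have hD : (3 / 4 : ℂ) • 1 + dualMat
      = diagonal fun p => ((3 / 4 + dualWeight (p.2.2.1, p.2.2.2.2) : ℝ) : ℂ) := by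
    rw [dualMat, ← diagonal_one, ← diagonal_smul, diagonal_add]
    congr 1; funext p
    push_cast; simp
  have hP : P0w.PosSemidef :=
    P0w_eq_sum_outer ▸ posSemidef_sum _ fun k _ => posSemidef_outer _
  rw [hD]
  refine .of_dotProduct_mulVec_nonneg ((isHermitian_diagonal_of_self_adjoint _ ?_).sub hP.1)
    fun x => ?_
  · exact funext fun _ => Complex.conj_ofReal _
  · rw [sub_mulVec, dotProduct_sub, star_dotProduct_diagonal_mulVec, star_dotProduct_P0w_mulVec,
      ← Complex.ofReal_sub, Complex.zero_le_real, sub_nonneg]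
    exact sum_normSq_le_sum_dualWeight_mul_normSq x

lemma posSemidef_dual_sub_P1w : ((3 / 4 : ℂ) • 1 + -dualMat - P1w).PosSemidef := by
  rw [← dualMat_submatrix_swapAB, ← P0w_submatrix_swapAB]
  convert posSemidef_dual_sub_P0w.submatrix swapAB using 1
  ext p q
  simp [one_apply]

lemma objective_le {σ0 σ1 : Mat I5} (h0 : IsDensity σ0) (h1 : IsDensity σ1)
    (h : trYA σ0 = trYA σ1) : (1 / 2 : ℂ) * hs σ0 P0w + (1 / 2 : ℂ) * hs σ1 P1w ≤ 3 / 4 := by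
  have hP0 : hs σ0 P0w ≤ 3 / 4 + hs σ0 dualMat := by
    rw [← h0.hs_smul_one_add]
    exact hs_le_hs_of_posSemidef_sub h0.1 posSemidef_dual_sub_P0w
  have hP1 : hs σ1 P1w ≤ 3 / 4 - hs σ0 dualMat := by
    rw [hs_dualMat h0.1.1, h, ← hs_dualMat h1.1.1, sub_eq_add_neg, ← hs_neg,
      ← h1.hs_smul_one_add]
    exact hs_le_hs_of_posSemidef_sub h1.1 posSemidef_dual_sub_P1w
  calc (1 / 2 : ℂ) * hs σ0 P0w + (1 / 2 : ℂ) * hs σ1 P1w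
      ≤ 1 / 2 * (3 / 4 + hs σ0 dualMat) + 1 / 2 * (3 / 4 - hs σ0 dualMat) := by gcongr
    _ = 3 / 4 := by ring

def aliceVec : I5 → ℂ := ket (idxYY (0, 0)) + (2 : ℂ) • ket (idx22 (0, 0))

def aliceState : Mat I5 := (6 : ℂ)⁻¹ • (outer aliceVec + outer (ket (0, 0, 2, 0, 0)))

def aliceMarginal (b : Fin 3 × Fin 3) : ℂ :=
  if b = (2, 2) then 4 / 6 else if b = (0, 2) then 1 / 6 else if b = (2, 0) then 1 / 6 else 0

lemma isDensity_aliceState : IsDensity aliceState := by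
  refine ⟨.smul ((posSemidef_outer _).add (posSemidef_outer _)) (by positivity), ?_⟩
  simp only [aliceState, aliceVec, trace_smul, trace_add, trace_outer, star_add, star_smul,
    star_ket, add_dotProduct, dotProduct_add, smul_dotProduct, dotProduct_smul, ket_dotProduct]
  simp [ket, idxYY, idx22, f23]
  norm_num

lemma hs_aliceState_P0w : hs aliceState P0w = 3 / 4 := by
  rw [hs_of_isHermitian isDensity_aliceState.1.1, aliceState, Matrix.smul_mul, trace_smul,
    Matrix.add_mul, trace_add, trace_outer_mul, trace_outer_mul, star_dotProduct_P0w_mulVec,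
    star_dotProduct_P0w_mulVec]
  simp [aliceVec, ket, idxYY, idx22, f23, Fintype.sum_prod_type, Fin.sum_univ_two,
    Fin.sum_univ_three]
  norm_num

lemma trYA_aliceState : trYA aliceState = diagonal aliceMarginal := by
  ext ⟨b0, b1⟩ ⟨b0', b1'⟩
  simp [trYA, aliceState, aliceVec, outer, ket, idxYY, idx22, f23, Fin.sum_univ_two,
    Fin.sum_univ_three, diagonal, aliceMarginal]
  split_ifs <;> simp_all [map_ofNat]
  norm_num

lemma aliceMarginal_swap (b : Fin 3 × Fin 3) : aliceMarginal b.swap = aliceMarginal b := by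
  obtain ⟨b0, b1⟩ := b
  fin_cases b0 <;> fin_cases b1 <;> simp [aliceMarginal]

lemma trYA_aliceState_submatrix_swapAB :
    trYA (aliceState.submatrix swapAB swapAB) = trYA aliceState := by
  rw [trYA_submatrix_swapAB, trYA_aliceState, ← Equiv.coe_prodComm, submatrix_diagonal_equiv]
  exact congrArg diagonal (funext aliceMarginal_swap)

theorem weak_coin_flipping_cheating_Alice :
    IsGreatest
      {x : ℝ | ∃ σ0 σ1 : Mat I5,
        IsDensity σ0 ∧ IsDensity σ1 ∧ trYA σ0 = trYA σ1 ∧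
        x = ((1/2 : ℂ) * hs σ0 P0w + (1/2 : ℂ) * hs σ1 P1w).re}
      (3/4) := by
  constructor
  · refine ⟨aliceState, aliceState.submatrix swapAB swapAB, isDensity_aliceState,
      isDensity_aliceState.submatrix_equiv swapAB, trYA_aliceState_submatrix_swapAB.symm, ?_⟩
    rw [← P0w_submatrix_swapAB, hs_submatrix_equiv, hs_aliceState_P0w]
    norm_num
  · rintro x ⟨σ0, σ1, h0, h1, h, rfl⟩
    simpa using (Complex.le_def.mp (objective_le h0 h1 h)).1

end
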